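/- arXiv:chao-dyn/9610002 — 4 statements merged into one kernel-verified Lean document; each statement's English description precedes it below -/
import Mathlib

section
/- Let p be an even probability measure on ℤ satisfying p(m) > 2·∑_{n=m+1}^∞ p(n) for all m ≥ 0. For each radius r and each ν ∈ {0,...,2·3^r - 1}, writing ν in the form ν = x₀·3^r + ∑_{k=1}^r c_k·3^{r-k} with x₀ ∈ {0,1} and c_k ∈ {0,1,2}, define ξ_min(ν) = x₀·p(0) + ∑_{k=1}^r c_k·p(k) and ξ_max(ν) = ξ_min(ν) + 2·∑_{n=r+1}^∞ p(n). Then the intervals [ξ_min(ν), ξ_max(ν)] for ν = 0,...,2·3^r - 1 are pairwise disjoint and ordered: ξ_max(ν) < ξ_min(ν+1) for all ν < 2·3^r - 1. -/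
/-!
Read `ν` as the base-3 numeral with digits `x₀, c₁, …, c_r`, most significant first. If `ν < ν'`,
the digit strings agree up to some place `j`, where `ν'` has the larger digit. Raising the `j`-th
digit by one adds `p(j)`, which by the gap condition exceeds `2·∑_{n>j} p(n)`; that bounds
everything the later digits of `ν`, together with the width `2·∑_{n>r} p(n)` of its interval, can
contribute. The proof runs this argument as an induction on `r`.
-/

open Finset

def ternaryValue (a : ℕ → ℕ) (r : ℕ) : ℕ :=
  ∑ k ∈ range (r + 1), a k * 3 ^ (r - k)

lemma ternaryValue_zero (a : ℕ → ℕ) : ternaryValue a 0 = a 0 := by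
  simp [ternaryValue]

lemma ternaryValue_succ (a : ℕ → ℕ) (r : ℕ) :
    ternaryValue a (r + 1) = 3 * ternaryValue a r + a (r + 1) := by
  rw [ternaryValue, ternaryValue, sum_range_succ, mul_sum, Nat.sub_self, pow_zero, mul_one]
  congr 1
  refine sum_congr rfl fun k hk => ?_
  rw [Nat.sub_add_comm (mem_range_succ_iff.mp hk), pow_succ]
  ring

lemma eq_of_ternaryValue_eq {a b : ℕ → ℕ} (ha : ∀ k, a k ≤ 2) (hb : ∀ k, b k ≤ 2) {r : ℕ}
    (h : ternaryValue a r = ternaryValue b r) :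
    ∀ k ≤ r, a k = b k := by
  induction r with
  | zero => simpa [ternaryValue_zero] using h
  | succ r ih =>
    rw [ternaryValue_succ, ternaryValue_succ] at h
    have hlast := ha (r + 1)
    have hlast' := hb (r + 1)
    intro k hk
    rcases Nat.le_add_one_iff.mp hk with hk | rfl
    · exact ih (by omega) k hk
    · omega

lemma ternaryValue_lt_or_of_succ_lt {a b : ℕ → ℕ} (hb : ∀ k, b k ≤ 2) {r : ℕ}
    (h : ternaryValue a (r + 1) < ternaryValue b (r + 1)) :
    ternaryValue a r < ternaryValue b r ∨
      ternaryValue a r = ternaryValue b r ∧ a (r + 1) < b (r + 1) := by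
  rw [ternaryValue_succ, ternaryValue_succ] at h
  have := hb (r + 1)
  omega

lemma natCast_mul_add_lt_natCast_mul {x y : ℕ} {q t : ℝ} (hxy : x < y) (hq : 0 ≤ q) (ht : t < q) :
    x * q + t < y * q := by
  have : ((x : ℝ) + 1) * q ≤ y * q := by gcongr; exact_mod_cast hxy
  linarith

/-- `T m` plays the role of the tail `∑_{n>m} q n`. -/
theorem sum_mul_add_two_mul_tail_lt_of_ternaryValue_lt {q T : ℕ → ℝ} (hq : ∀ k, 0 ≤ q k)
    (hT : ∀ m, T m = q (m + 1) + T (m + 1)) (hgap : ∀ m, 2 * T m < q m)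
    {a b : ℕ → ℕ} (ha : ∀ k, a k ≤ 2) (hb : ∀ k, b k ≤ 2) {r : ℕ}
    (hab : ternaryValue a r < ternaryValue b r) :
    ∑ k ∈ range (r + 1), (a k : ℝ) * q k + 2 * T r < ∑ k ∈ range (r + 1), (b k : ℝ) * q k := by
  induction r with
  | zero =>
    rw [ternaryValue_zero, ternaryValue_zero] at hab
    simpa using natCast_mul_add_lt_natCast_mul hab (hq 0) (hgap 0)
  | succ r ih =>
    rw [sum_range_succ _ (r + 1), sum_range_succ _ (r + 1)]
    rcases ternaryValue_lt_or_of_succ_lt hb hab with hlt | ⟨heq, hlast⟩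
    · have hdigit : (a (r + 1) : ℝ) * q (r + 1) ≤ 2 * q (r + 1) := by
        gcongr
        · exact hq _
        · exact_mod_cast ha _
      have hb_nonneg : 0 ≤ (b (r + 1) : ℝ) * q (r + 1) := mul_nonneg (Nat.cast_nonneg _) (hq _)
      linarith [ih hlt, hT r]
    · have hprefix : ∑ k ∈ range (r + 1), (a k : ℝ) * q k = ∑ k ∈ range (r + 1), (b k : ℝ) * q k :=
        sum_congr rfl fun k hk => by
          rw [eq_of_ternaryValue_eq ha hb heq k (mem_range_succ_iff.mp hk)]
      linarith [natCast_mul_add_lt_natCast_mul hlast (hq (r + 1)) (hgap (r + 1))]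

lemma tsum_int_tail_eq (p : ℤ → ℝ) (hp : Summable p) (m : ℕ) :
    ∑' n : ℕ, p ((m : ℤ) + 1 + n) = p ((m + 1 : ℕ) : ℤ) + ∑' n : ℕ, p ((m + 1 : ℕ) + 1 + n) := by
  have hinj : Function.Injective fun n : ℕ => (m : ℤ) + 1 + n := fun x y h => by
    simpa using h
  have htail : Summable fun n : ℕ => p ((m : ℤ) + 1 + n) := hp.comp_injective hinj
  rw [htail.tsum_eq_zero_add]
  push_cast
  congr 2 with n
  ring_nf

lemma sum_range_succ_ite_zero {R : Type*} [Semiring R] (x₀ : ℕ) (c : ℕ → ℕ) (w : ℕ → R)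
    (r : ℕ) :
    ∑ k ∈ range (r + 1), ((if k = 0 then x₀ else c k : ℕ) : R) * w k
      = x₀ * w 0 + ∑ k ∈ Icc 1 r, (c k : R) * w k := by
  rw [range_eq_Ico, sum_eq_sum_Ico_succ_bot (Nat.succ_pos r), zero_add, Nat.succ_eq_add_one,
    Ico_add_one_right_eq_Icc, if_pos rfl]
  congr 1
  exact sum_congr rfl fun k hk => by rw [if_neg (by simp at hk; omega)]

theorem stmt_3_general (p : ℤ → ℝ) (hnn : ∀ n, 0 ≤ p n)
    (hsumm : Summable p)
    (hgap : ∀ m : ℕ, p (m : ℤ) > 2 * ∑' n : ℕ, p ((m : ℤ) + 1 + n))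
    (r : ℕ) (x₀ y₀ : ℕ) (hx₀ : x₀ ≤ 1) (hy₀ : y₀ ≤ 1)
    (c d : ℕ → ℕ) (hc : ∀ k, c k ≤ 2) (hd : ∀ k, d k ≤ 2)
    (hlt : x₀ * 3 ^ r + ∑ k ∈ Finset.Icc 1 r, c k * 3 ^ (r - k)
         < y₀ * 3 ^ r + ∑ k ∈ Finset.Icc 1 r, d k * 3 ^ (r - k)) :
    ((x₀ : ℝ) * p 0 + ∑ k ∈ Finset.Icc 1 r, (c k : ℝ) * p (k : ℤ))
        + 2 * ∑' n : ℕ, p ((r : ℤ) + 1 + n)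
      < (y₀ : ℝ) * p 0 + ∑ k ∈ Finset.Icc 1 r, (d k : ℝ) * p (k : ℤ) := by
  have hdigits (z₀ : ℕ) (hz₀ : z₀ ≤ 1) (e : ℕ → ℕ) (he : ∀ k, e k ≤ 2) (k : ℕ) :
      (if k = 0 then z₀ else e k) ≤ 2 := by
    split_ifs
    · omega
    · exact he k
  have hν : ternaryValue (fun k => if k = 0 then x₀ else c k) r
      < ternaryValue (fun k => if k = 0 then y₀ else d k) r := by
    have hx := sum_range_succ_ite_zero x₀ c (fun k => 3 ^ (r - k)) r
    have hy := sum_range_succ_ite_zero y₀ d (fun k => 3 ^ (r - k)) r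
    exact hx.trans_lt (hlt.trans_eq hy.symm)
  have key := sum_mul_add_two_mul_tail_lt_of_ternaryValue_lt (q := fun k => p k)
    (T := fun m => ∑' n : ℕ, p ((m : ℤ) + 1 + n)) (fun k => hnn k)
    (tsum_int_tail_eq p hsumm) hgap (hdigits x₀ hx₀ c hc) (hdigits y₀ hy₀ d hd) hν
  simpa only [sum_range_succ_ite_zero, Nat.cast_zero] using key

/-- For an even probability measure `p` on `ℤ` satisfying the gap conditions
`p(m) > 2·∑_{n=m+1}^∞ p(n)`, the C-intervals `[ξ_min(ν), ξ_max(ν)]`,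
`ν = x₀·3^r + ∑_{k=1}^r c_k·3^{r-k}`, are pairwise disjoint and ordered:
whenever `ν < ν'` one has `ξ_max(ν) < ξ_min(ν')`. -/
theorem stmt_3 (p : ℤ → ℝ) (hnn : ∀ n, 0 ≤ p n) (heven : ∀ n, p (-n) = p n)
    (hsumm : Summable p) (hsum : ∑' n : ℤ, p n = 1)
    (hgap : ∀ m : ℕ, p (m : ℤ) > 2 * ∑' n : ℕ, p ((m : ℤ) + 1 + n))
    (r : ℕ) (x₀ y₀ : ℕ) (hx₀ : x₀ ≤ 1) (hy₀ : y₀ ≤ 1)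
    (c d : ℕ → ℕ) (hc : ∀ k, c k ≤ 2) (hd : ∀ k, d k ≤ 2)
    (hlt : x₀ * 3 ^ r + ∑ k ∈ Finset.Icc 1 r, c k * 3 ^ (r - k)
         < y₀ * 3 ^ r + ∑ k ∈ Finset.Icc 1 r, d k * 3 ^ (r - k)) :
    ((x₀ : ℝ) * p 0 + ∑ k ∈ Finset.Icc 1 r, (c k : ℝ) * p (k : ℤ))
        + 2 * ∑' n : ℕ, p ((r : ℤ) + 1 + n)
      < (y₀ : ℝ) * p 0 + ∑ k ∈ Finset.Icc 1 r, (d k : ℝ) * p (k : ℤ) :=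
  stmt_3_general p hnn hsumm hgap r x₀ y₀ hx₀ hy₀ c d hc hd hlt
end

section
/- Under the disjointness conditions on p, for each radius r the sequence ν ↦ ξ_min(ν) is strictly increasing on {0, 1, ..., 2·3^r - 1}. -/
open Finset

private lemma geom3 (n : ℕ) : ∑ j ∈ Finset.range n, 2 * 3 ^ j < 3 ^ n := by
  induction n with
  | zero => simp
  | succ n ih => rw [Finset.sum_range_succ, pow_succ]; omega

private lemma split_sum {M : Type*} [AddCommMonoid M] (f : ℕ → M) (r : ℕ) :
    ∑ k ∈ Finset.range (r + 1), f k = f 0 + ∑ k ∈ Finset.Icc 1 r, f k := by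
  rw [Finset.range_eq_Ico, ← Finset.sum_Ico_consecutive f (Nat.zero_le 1) (by omega : 1 ≤ r + 1)]
  simp [Finset.Ico_add_one_right_eq_Icc]

private lemma tail_lt (m r : ℕ) :
    ∑ k ∈ Finset.Icc (m + 1) r, 2 * 3 ^ (r - k) < 3 ^ (r - m) := by
  have h1 : ∑ k ∈ Finset.Icc (m + 1) r, 2 * 3 ^ (r - k)
      = ∑ j ∈ Finset.range (r - m), 2 * 3 ^ (r - m - 1 - j) := by
    rw [← Finset.Ico_add_one_right_eq_Icc, Finset.sum_Ico_eq_sum_range]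
    refine Finset.sum_congr (by congr 1; omega) fun j hj => ?_
    simp only [Finset.mem_range] at hj
    have he : r - (m + 1 + j) = r - m - 1 - j := by omega
    rw [he]
  rw [h1, Finset.sum_range_reflect (fun j => 2 * 3 ^ j) (r - m)]
  exact geom3 (r - m)

/-- Under the (finite) disjointness conditions on `p`, the map `ν ↦ ξ_min(ν)` is
strictly increasing on `{0, …, 2·3^r − 1}`. -/
theorem stmt_4 (p : ℕ → ℝ) (hnn : ∀ n, 0 ≤ p n) (r : ℕ)
    (hgap : ∀ m : ℕ, m ≤ r → p m > 2 * ∑ j ∈ Finset.Icc (m + 1) r, p j)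
    (x₀ y₀ : ℕ) (hx₀ : x₀ ≤ 1) (hy₀ : y₀ ≤ 1)
    (c d : ℕ → ℕ) (hc : ∀ k, c k ≤ 2) (hd : ∀ k, d k ≤ 2)
    (hlt : x₀ * 3 ^ r + ∑ k ∈ Finset.Icc 1 r, c k * 3 ^ (r - k)
         < y₀ * 3 ^ r + ∑ k ∈ Finset.Icc 1 r, d k * 3 ^ (r - k)) :
    (x₀ : ℝ) * p 0 + ∑ k ∈ Finset.Icc 1 r, (c k : ℝ) * p k
      < (y₀ : ℝ) * p 0 + ∑ k ∈ Finset.Icc 1 r, (d k : ℝ) * p k := by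
  set a : ℕ → ℕ := fun k => if k = 0 then x₀ else c k with ha
  set b : ℕ → ℕ := fun k => if k = 0 then y₀ else d k with hb
  have ha2 : ∀ k, a k ≤ 2 := by
    intro k
    show (if k = 0 then x₀ else c k) ≤ 2
    split
    · omega
    · exact hc k
  have hb2 : ∀ k, b k ≤ 2 := by
    intro k
    show (if k = 0 then y₀ else d k) ≤ 2
    split
    · omega
    · exact hd k
  -- rewrite numeric hypothesis as sums over range (r+1)
  have hval : ∑ k ∈ Finset.range (r + 1), a k * 3 ^ (r - k)
      < ∑ k ∈ Finset.range (r + 1), b k * 3 ^ (r - k) := by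
    rw [split_sum, split_sum]
    have e1 : ∑ k ∈ Finset.Icc 1 r, a k * 3 ^ (r - k)
        = ∑ k ∈ Finset.Icc 1 r, c k * 3 ^ (r - k) := by
      refine Finset.sum_congr rfl fun k hk => ?_
      simp only [Finset.mem_Icc] at hk
      simp only [ha]; rw [if_neg (by omega)]
    have e2 : ∑ k ∈ Finset.Icc 1 r, b k * 3 ^ (r - k)
        = ∑ k ∈ Finset.Icc 1 r, d k * 3 ^ (r - k) := by
      refine Finset.sum_congr rfl fun k hk => ?_
      simp only [Finset.mem_Icc] at hk
      simp only [hb]; rw [if_neg (by omega)]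
    rw [e1, e2]
    simpa [ha, hb] using hlt
  -- rewrite goal as sums over range (r+1)
  have egoal : ((x₀ : ℝ) * p 0 + ∑ k ∈ Finset.Icc 1 r, (c k : ℝ) * p k
      < (y₀ : ℝ) * p 0 + ∑ k ∈ Finset.Icc 1 r, (d k : ℝ) * p k) ↔
      (∑ k ∈ Finset.range (r + 1), (a k : ℝ) * p k
        < ∑ k ∈ Finset.range (r + 1), (b k : ℝ) * p k) := by
    rw [split_sum (fun k => (a k : ℝ) * p k), split_sum (fun k => (b k : ℝ) * p k)]
    have e1 : ∑ k ∈ Finset.Icc 1 r, (a k : ℝ) * p k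
        = ∑ k ∈ Finset.Icc 1 r, (c k : ℝ) * p k := by
      refine Finset.sum_congr rfl fun k hk => ?_
      simp only [Finset.mem_Icc] at hk
      simp only [ha]; rw [if_neg (by omega)]
    have e2 : ∑ k ∈ Finset.Icc 1 r, (b k : ℝ) * p k
        = ∑ k ∈ Finset.Icc 1 r, (d k : ℝ) * p k := by
      refine Finset.sum_congr rfl fun k hk => ?_
      simp only [Finset.mem_Icc] at hk
      simp only [hb]; rw [if_neg (by omega)]
    rw [e1, e2]
    simp [ha, hb]
  rw [egoal]
  -- find the least differing index
  set S : Finset ℕ := (Finset.range (r + 1)).filter (fun k => a k ≠ b k) with hS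
  have hSne : S.Nonempty := by
    by_contra h
    rw [Finset.not_nonempty_iff_eq_empty] at h
    have : ∑ k ∈ Finset.range (r + 1), a k * 3 ^ (r - k)
        = ∑ k ∈ Finset.range (r + 1), b k * 3 ^ (r - k) := by
      refine Finset.sum_congr rfl fun k hk => ?_
      have : k ∉ S := by rw [h]; exact Finset.notMem_empty k
      simp only [hS, Finset.mem_filter, not_and, not_not] at this
      rw [this hk]
    omega
  set m := S.min' hSne with hm
  have hmS : m ∈ S := S.min'_mem hSne
  have hmr : m ≤ r := by
    have := Finset.mem_filter.mp hmS
    have := Finset.mem_range.mp this.1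
    omega
  have hmne : a m ≠ b m := (Finset.mem_filter.mp hmS).2
  have hpre : ∀ k, k < m → a k = b k := by
    intro k hk
    by_contra hne
    by_cases hkr : k ∈ Finset.range (r + 1)
    · have : k ∈ S := Finset.mem_filter.mpr ⟨hkr, hne⟩
      have := S.min'_le k this
      omega
    · simp only [Finset.mem_range] at hkr
      omega
  -- split sums at m
  have hsplit : ∀ {M : Type} [AddCommMonoid M] (f : ℕ → M),
      ∑ k ∈ Finset.range (r + 1), f k
        = (∑ k ∈ Finset.Ico 0 m, f k) + f m + ∑ k ∈ Finset.Icc (m + 1) r, f k := by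
    intro M _ f
    rw [Finset.range_eq_Ico,
      ← Finset.sum_Ico_consecutive f (Nat.zero_le m) (by omega : m ≤ r + 1),
      Finset.sum_eq_sum_Ico_succ_bot (by omega : m < r + 1) f, Finset.Ico_add_one_right_eq_Icc]
    rw [add_assoc]
  -- digit comparison at m : a m < b m
  have hamb : a m < b m := by
    by_contra hge
    have hba : b m < a m := by omega
    rw [hsplit (fun k => a k * 3 ^ (r - k)), hsplit (fun k => b k * 3 ^ (r - k))] at hval
    have epre : ∑ k ∈ Finset.Ico 0 m, a k * 3 ^ (r - k)
        = ∑ k ∈ Finset.Ico 0 m, b k * 3 ^ (r - k) := by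
      refine Finset.sum_congr rfl fun k hk => ?_
      simp only [Finset.mem_Ico] at hk
      rw [hpre k hk.2]
    rw [epre] at hval
    have hBtail : ∑ k ∈ Finset.Icc (m + 1) r, b k * 3 ^ (r - k) < 3 ^ (r - m) := by
      calc ∑ k ∈ Finset.Icc (m + 1) r, b k * 3 ^ (r - k)
          ≤ ∑ k ∈ Finset.Icc (m + 1) r, 2 * 3 ^ (r - k) :=
            Finset.sum_le_sum fun k _ => Nat.mul_le_mul_right _ (hb2 k)
        _ < 3 ^ (r - m) := tail_lt m r
    have hmul : (b m + 1) * 3 ^ (r - m) ≤ a m * 3 ^ (r - m) :=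
      Nat.mul_le_mul_right _ (by omega)
    rw [add_mul, one_mul] at hmul
    omega
  -- now the real inequality
  rw [hsplit (fun k => (a k : ℝ) * p k), hsplit (fun k => (b k : ℝ) * p k)]
  have epre : ∑ k ∈ Finset.Ico 0 m, (a k : ℝ) * p k
      = ∑ k ∈ Finset.Ico 0 m, (b k : ℝ) * p k := by
    refine Finset.sum_congr rfl fun k hk => ?_
    simp only [Finset.mem_Ico] at hk
    rw [hpre k hk.2]
  rw [epre]
  have hAtail : ∑ k ∈ Finset.Icc (m + 1) r, (a k : ℝ) * p k
      ≤ 2 * ∑ k ∈ Finset.Icc (m + 1) r, p k := by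
    rw [Finset.mul_sum]
    refine Finset.sum_le_sum fun k _ => ?_
    have : (a k : ℝ) ≤ 2 := by exact_mod_cast ha2 k
    nlinarith [hnn k]
  have hBtail : (0 : ℝ) ≤ ∑ k ∈ Finset.Icc (m + 1) r, (b k : ℝ) * p k :=
    Finset.sum_nonneg fun k _ => mul_nonneg (by positivity) (hnn k)
  have hgapm := hgap m hmr
  have hm1 : (a m : ℝ) + 1 ≤ (b m : ℝ) := by exact_mod_cast hamb
  have hpm : 0 ≤ p m := hnn m
  nlinarith [hpm]
end

section
/- If b > 3, then the set of all values of ((b−1)/(b+1))·(x₀ + ∑_{n=1}^∞ c_n/b^n), where x₀ ∈ {0,1} and each c_n ∈ {0,1,2}, is a set of Lebesgue measure zero in [0,1]. -/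
/-!
The tails `K = {∑ cₙ / b^(n+1) | cₙ ∈ {0, …, m}}` form a self-similar set: splitting off the first
digit covers `K` by `m + 1` copies of itself scaled by `1/b`, so `λ(K) ≤ ((m + 1)/b) λ(K)`.
As `K` is bounded, `λ(K) < ∞`, and `m + 1 < b` forces `λ(K) = 0`. The set in the theorem is a
countable union of affine images of `K` with `m = 2`.
-/

open Set MeasureTheory
open scoped Pointwise

theorem Real.volume_image_mul_add (a e : ℝ) (s : Set ℝ) :
    volume ((fun x => a * x + e) '' s) = ENNReal.ofReal |a| * volume s := by
  have : (fun x => a * x + e) '' s = (fun y => y + e) '' (a • s) := by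
    rw [← image_smul, image_image]; rfl
  rw [this, image_add_right, measure_preimage_add_right, Measure.addHaar_smul,
    Module.finrank_self, pow_one]

theorem ENNReal.eq_zero_of_le_mul_of_lt_one {x r : ENNReal} (hx : x ≠ ⊤) (hr : r < 1)
    (h : x ≤ r * x) : x = 0 := by
  by_contra h0
  have : r * x < 1 * x := ENNReal.mul_lt_mul_left h0 hx hr
  rw [one_mul] at this
  exact (h.trans_lt this).false

def digitExpansions (b : ℝ) (m : ℕ) : Set ℝ :=
  {t | ∃ c : ℕ → ℕ, (∀ n, c n ≤ m) ∧ t = ∑' n, (c n : ℝ) / b ^ (n + 1)}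

section
variable {b : ℝ} {m : ℕ}

theorem summable_digit_div_pow (hb : 1 < b) {c : ℕ → ℕ} (hc : ∀ n, c n ≤ m) :
    Summable fun n => (c n : ℝ) / b ^ (n + 1) := by
  have hgeo : Summable fun n : ℕ => (m / b) * (b⁻¹) ^ n :=
    (summable_geometric_of_lt_one (by positivity) (inv_lt_one_of_one_lt₀ hb)).mul_left _
  refine hgeo.of_nonneg_of_le (fun n => by positivity) fun n => ?_
  rw [show (m / b) * b⁻¹ ^ n = m / b ^ (n + 1) by rw [inv_pow, pow_succ']; field_simp]
  gcongr
  exact_mod_cast hc n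

theorem digitExpansions_subset_Icc (hb : 1 < b) :
    digitExpansions b m ⊆ Icc 0 (∑' n, (m : ℝ) / b ^ (n + 1)) := by
  rintro _ ⟨c, hc, rfl⟩
  refine ⟨tsum_nonneg fun n => by positivity,
    (summable_digit_div_pow hb hc).tsum_le_tsum (fun n => ?_)
      (summable_digit_div_pow (c := fun _ => m) hb fun _ => le_rfl)⟩
  gcongr
  exact_mod_cast hc n

theorem digitExpansions_subset_iUnion (hb : 1 < b) :
    digitExpansions b m ⊆
      ⋃ d ∈ Finset.range (m + 1), (fun x => b⁻¹ * x + d / b) '' digitExpansions b m := by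
  rintro _ ⟨c, hc, rfl⟩
  refine mem_biUnion (Finset.mem_range_succ_iff.2 (hc 0))
    ⟨_, ⟨fun n => c (n + 1), fun n => hc (n + 1), rfl⟩, ?_⟩
  dsimp only
  rw [(summable_digit_div_pow hb hc).tsum_eq_zero_add, ← tsum_mul_left, add_comm]
  congr 1
  · ring
  · congr 1 with n
    rw [pow_succ' b (n + 1)]
    field_simp

theorem volume_digitExpansions (hb : (m + 1 : ℝ) < b) : volume (digitExpansions b m) = 0 := by
  have hb1 : 1 < b := by linarith [(m.cast_nonneg : (0 : ℝ) ≤ m)]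
  have hfin : volume (digitExpansions b m) ≠ ⊤ :=
    ((Metric.isBounded_Icc _ _).subset (digitExpansions_subset_Icc hb1)).measure_lt_top.ne
  refine ENNReal.eq_zero_of_le_mul_of_lt_one hfin (r := ENNReal.ofReal ((m + 1) / b)) ?_ ?_
  · rw [ENNReal.ofReal_lt_one, div_lt_one (by linarith)]
    exact hb
  calc volume (digitExpansions b m)
      ≤ volume (⋃ d ∈ Finset.range (m + 1),
          (fun x => b⁻¹ * x + d / b) '' digitExpansions b m) :=
        measure_mono (digitExpansions_subset_iUnion hb1)
    _ ≤ ∑ d ∈ Finset.range (m + 1),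
          volume ((fun x => b⁻¹ * x + d / b) '' digitExpansions b m) :=
        measure_biUnion_finset_le _ _
    _ = ENNReal.ofReal ((m + 1) / b) * volume (digitExpansions b m) := by
      simp only [Real.volume_image_mul_add, Finset.sum_const, Finset.card_range, nsmul_eq_mul,
        ← mul_assoc]
      rw [abs_of_pos (by positivity), ← ENNReal.ofReal_natCast,
        ← ENNReal.ofReal_mul (by positivity)]
      congr 2
      push_cast
      ring

end

/-- If `b > 3`, the set of all values `((b−1)/(b+1))·(x₀ + ∑_{n=1}^∞ cₙ/bⁿ)` with
`x₀ ∈ {0,1}` and `cₙ ∈ {0,1,2}` has Lebesgue measure zero. -/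
theorem stmt_10 (b : ℝ) (hb : 3 < b) :
    volume {y : ℝ | ∃ x₀ : ℕ, x₀ ≤ 1 ∧ ∃ c : ℕ → ℕ, (∀ n, c n ≤ 2) ∧
      y = (b - 1) / (b + 1) * ((x₀ : ℝ) + ∑' n : ℕ, (c n : ℝ) / b ^ (n + 1))} = 0 := by
  set k := (b - 1) / (b + 1)
  have hcover : {y : ℝ | ∃ x₀ : ℕ, x₀ ≤ 1 ∧ ∃ c : ℕ → ℕ, (∀ n, c n ≤ 2) ∧
      y = k * ((x₀ : ℝ) + ∑' n : ℕ, (c n : ℝ) / b ^ (n + 1))} ⊆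
      ⋃ x₀ : ℕ, (fun t => k * t + k * x₀) '' digitExpansions b 2 := by
    rintro _ ⟨x₀, -, c, hc, rfl⟩
    exact mem_iUnion.2 ⟨x₀, _, ⟨c, hc, rfl⟩, by ring⟩
  have hK : volume (digitExpansions b 2) = 0 := volume_digitExpansions (by norm_num; linarith)
  refine measure_mono_null hcover (measure_iUnion_null fun x₀ => ?_)
  rw [Real.volume_image_mul_add, hK, mul_zero]
end

section
/- Let λ > log 3, p(n) = tanh(λ/2)e^{-λ|n|}, and let Σ_λ be the corresponding random variable with law μ_λ. For symmetric radius-1 CA rules f₁, f₂ represented by subsets A₁, A₂ (unions of C-intervals), the distance μ_λ(A₁ Δ A₂) equals (1/8)·(number of radius-1 neighborhood classes on which f₁ and f₂ disagree, weighted by multiplicity), and in particular does not depend on λ. -/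
/-!
Split `Σ = X(0) p(0) + (X(-1) + X(1)) p(1) + R` with `0 ≤ R ≤ T := 2 ∑_{n ≥ 2} p(n)`.
For `e^{-λ} < 1/3` one has `T < p(1)` and `2 p(1) + T < p(0)`, so the two "digits"
`X(0)` and `X(-1) + X(1)` of `Σ` can be read off: `Σ` lies in exactly one C-interval, the one
indexed by the neighbourhood class of `(X(-1), X(0), X(1))`. By the symmetry of `f`, `Σ ∈ A_f`
iff `f (X(-1), X(0), X(1)) = 1`. Thus `Σ ∈ A₁ Δ A₂` iff the neighbourhood of the origin is one of
those where `f₁ ≠ f₂`, and each of the `8` neighbourhoods has probability `1/8` by independence.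
-/

open MeasureTheory ProbabilityTheory Set

theorem Real.exp_neg_lt_inv_of_log_lt {a l : ℝ} (ha : 0 < a) (h : Real.log a < l) :
    Real.exp (-l) < a⁻¹ := by
  rw [← Real.exp_log (inv_pos.mpr ha), Real.log_inv]
  exact Real.exp_lt_exp.mpr (by linarith)

theorem Real.tanh_pos {x : ℝ} (hx : 0 < x) : 0 < Real.tanh x := by
  rw [Real.tanh_eq_sinh_div_cosh]
  exact div_pos (Real.sinh_pos_iff.mpr hx) (Real.cosh_pos x)

theorem eq_mul_pow_natAbs_of_eq_mul_exp {p : ℤ → ℝ} {c l : ℝ}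
    (hp : ∀ n : ℤ, p n = c * Real.exp (-l * |(n : ℝ)|)) (n : ℤ) :
    p n = c * Real.exp (-l) ^ n.natAbs := by
  rw [hp, ← Real.exp_nat_mul, Nat.cast_natAbs, Int.cast_abs]
  ring_nf

/-- Weights for which `∑ xₙ pₙ` with `xₙ ∈ {0, 1}` determines `x₀` and `x₋₁ + x₁`. -/
structure IsDigitWeights (p : ℤ → ℝ) : Prop where
  summable : Summable p
  even : ∀ n, p (-n) = p n
  nonneg : ∀ n, 0 ≤ p n
  separated : 2 * ∑' n : ℕ, p (2 + n) < p 1 ∧ 2 * p 1 + 2 * ∑' n : ℕ, p (2 + n) < p 0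

section GeometricWeights

variable {p : ℤ → ℝ} {c r : ℝ}

theorem summable_of_eq_mul_pow_natAbs (hp : ∀ n, p n = c * r ^ n.natAbs) (hr0 : 0 ≤ r)
    (hr1 : r < 1) : Summable p := by
  have hgeom : Summable fun n : ℕ => c * r ^ n :=
    (summable_geometric_of_lt_one hr0 hr1).mul_left c
  exact .of_nat_of_neg (by simpa [hp] using hgeom) (by simpa [hp] using hgeom)

theorem tsum_two_add_of_eq_mul_pow_natAbs (hp : ∀ n, p n = c * r ^ n.natAbs) (hr0 : 0 ≤ r)
    (hr1 : r < 1) : ∑' n : ℕ, p (2 + n) = c * r ^ 2 / (1 - r) := by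
  have hn : ∀ n : ℕ, p (2 + n) = c * r ^ 2 * r ^ n := fun n => by
    rw [hp, show ((2 : ℤ) + n).natAbs = 2 + n by omega, pow_add, mul_assoc]
  rw [tsum_congr hn, tsum_mul_left, tsum_geometric_of_lt_one hr0 hr1, div_eq_mul_inv]

theorem isDigitWeights_of_eq_mul_pow_natAbs (hp : ∀ n, p n = c * r ^ n.natAbs) (hc : 0 < c)
    (hr0 : 0 < r) (hr : r < 1 / 3) : IsDigitWeights p := by
  refine ⟨summable_of_eq_mul_pow_natAbs hp hr0.le (by linarith),
    fun n => by rw [hp, hp, Int.natAbs_neg], fun n => by rw [hp]; have := hc.le; positivity, ?_⟩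
  rw [tsum_two_add_of_eq_mul_pow_natAbs hp hr0.le (by linarith), hp, hp]
  have h1r : 0 < 1 - r := by linarith
  -- both inequalities reduce to `c (1 - 3 r) > 0`: this is where `λ > log 3` enters
  have h3r : 0 < 1 - 3 * r := by linarith
  simp only [Int.natAbs_one, Int.natAbs_zero, pow_one, pow_zero, mul_one]
  have hlt : 2 * (c * r ^ 2) / (1 - r) < c * r := by
    rw [div_lt_iff₀ h1r]; nlinarith [mul_pos (mul_pos hc hr0) h3r]
  refine ⟨by rwa [← mul_div_assoc], ?_⟩
  have hlt' : 2 * (c * r ^ 2) / (1 - r) < c - 2 * (c * r) := by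
    rw [div_lt_iff₀ h1r]; nlinarith [mul_pos hc h3r]
  rw [← mul_div_assoc]
  linarith

end GeometricWeights

theorem exists_tsum_eq_sum_add_of_nonneg_of_le {ι : Type*} {g p : ι → ℝ} (s : Finset ι)
    (hp : Summable p) (hg : 0 ≤ g) (hgp : g ≤ p) :
    ∃ R ∈ Icc 0 (∑' i : ↑(s : Set ι)ᶜ, p i), ∑' i, g i = ∑ i ∈ s, g i + R := by
  have hgs : Summable g := hp.of_nonneg_of_le hg hgp
  refine ⟨∑' i : ↑(s : Set ι)ᶜ, g i, ⟨tsum_nonneg fun i => hg i, ?_⟩,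
    (hgs.sum_add_tsum_compl).symm⟩
  exact (hgs.subtype _).tsum_le_tsum (fun i => hgp i) (hp.subtype _)

theorem tsum_compl_eq_two_mul_tsum_of_even {p : ℤ → ℝ} (hp : Summable p)
    (heven : ∀ n, p (-n) = p n) :
    ∑' n : ↑(({-1, 0, 1} : Finset ℤ) : Set ℤ)ᶜ, p n = 2 * ∑' n : ℕ, p (2 + n) := by
  have hnat : Summable fun n : ℕ => p n := hp.comp_injective Nat.cast_injective
  have hneg : Summable fun n : ℕ => p (-(n + 1)) :=
    hp.comp_injective fun m n h => by simpa using h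
  have hnat1 : Summable fun n : ℕ => p (n + 1) := by
    simpa using (summable_nat_add_iff 1).2 hnat
  have hsplit := hp.sum_add_tsum_compl (s := {-1, 0, 1})
  rw [tsum_of_nat_of_neg_add_one hnat hneg, tsum_congr fun n : ℕ => heven (n + 1),
    hnat.tsum_eq_zero_add, Finset.sum_insert (by decide), Finset.sum_insert (by decide),
    Finset.sum_singleton, heven 1] at hsplit
  push_cast at hsplit
  rw [hnat1.tsum_eq_zero_add] at hsplit
  push_cast at hsplit
  rw [tsum_congr fun n : ℕ => congrArg p (by ring : (2 : ℤ) + n = n + 1 + 1)]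
  linarith

theorem Nat.eq_of_mul_add_eq_mul_add {a r r' : ℝ} {k k' : ℕ} (hr : 0 ≤ r) (hra : r < a)
    (hr' : 0 ≤ r') (hr'a : r' < a) (h : k * a + r = k' * a + r') : k = k' := by
  by_contra hne
  rcases Nat.lt_or_gt_of_ne hne with hlt | hlt
  · have : (k : ℝ) + 1 ≤ k' := by exact_mod_cast hlt
    nlinarith
  · have : (k' : ℝ) + 1 ≤ k := by exact_mod_cast hlt
    nlinarith

theorem add_mem_Icc_iff_of_lt {p₀ p₁ T R : ℝ} (hT : T < p₁) (hp : 2 * p₁ + T < p₀)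
    (hR : R ∈ Icc 0 T) {b s b' s' : ℕ} (hs : s ≤ 2) (hs' : s' ≤ 2) :
    b * p₀ + s * p₁ + R ∈ Icc (b' * p₀ + s' * p₁) (b' * p₀ + s' * p₁ + T) ↔
      b = b' ∧ s = s' := by
  obtain ⟨hR0, hRT⟩ := hR
  constructor
  · rintro ⟨hlo, hhi⟩
    have hp₁ : 0 < p₁ := by linarith
    have hsp : (s : ℝ) * p₁ ≤ 2 * p₁ := by gcongr; exact_mod_cast hs
    have hsp' : (s' : ℝ) * p₁ ≤ 2 * p₁ := by gcongr; exact_mod_cast hs'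
    have hs'0 : 0 ≤ (s' : ℝ) * p₁ := by positivity
    set R' := b * p₀ + s * p₁ + R - (b' * p₀ + s' * p₁) with hR'
    have hb : b = b' := Nat.eq_of_mul_add_eq_mul_add (a := p₀) (r := s * p₁ + R)
      (r' := s' * p₁ + R') (by positivity) (by linarith) (by linarith) (by linarith) (by ring)
    subst hb
    exact ⟨rfl, Nat.eq_of_mul_add_eq_mul_add (a := p₁) hR0 (by linarith) (r' := R')
      (by linarith) (by linarith) (by linarith)⟩
  · rintro ⟨rfl, rfl⟩
    exact ⟨by linarith, by linarith⟩

/-- The C-interval `[ξ_min ν, ξ_max ν]` of the index `ν = 3 x₂ + (x₁ + x₃)`, of length `T`. -/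
def cInterval (p₀ p₁ T : ℝ) (ν : ℕ) : Set ℝ :=
  Icc ((ν / 3 : ℕ) * p₀ + (ν % 3 : ℕ) * p₁) ((ν / 3 : ℕ) * p₀ + (ν % 3 : ℕ) * p₁ + T)

def nbhdIndex (u : Fin 2 × Fin 2 × Fin 2) : ℕ := (u.2.1 : ℕ) * 3 + (u.1 : ℕ) + (u.2.2 : ℕ)

def ruleSet (f : Fin 2 → Fin 2 → Fin 2 → Fin 2) (p₀ p₁ T : ℝ) : Set ℝ :=
  ⋃ u ∈ {u : Fin 2 × Fin 2 × Fin 2 | f u.1 u.2.1 u.2.2 = 1}, cInterval p₀ p₁ T (nbhdIndex u)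

theorem cInterval_nbhdIndex (p₀ p₁ T : ℝ) (u : Fin 2 × Fin 2 × Fin 2) :
    cInterval p₀ p₁ T (nbhdIndex u) =
      Icc ((u.2.1 : ℕ) * p₀ + ((u.1 : ℕ) + u.2.2 : ℕ) * p₁)
        ((u.2.1 : ℕ) * p₀ + ((u.1 : ℕ) + u.2.2 : ℕ) * p₁ + T) := by
  have hu₁ := u.1.is_le
  have hu₃ := u.2.2.is_le
  rw [cInterval, nbhdIndex, show ((u.2.1 : ℕ) * 3 + u.1 + u.2.2) / 3 = u.2.1 by omega,
    show ((u.2.1 : ℕ) * 3 + u.1 + u.2.2) % 3 = u.1 + u.2.2 by omega]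

theorem measurableSet_ruleSet (f : Fin 2 → Fin 2 → Fin 2 → Fin 2) (p₀ p₁ T : ℝ) :
    MeasurableSet (ruleSet f p₀ p₁ T) :=
  .biUnion (to_countable _) fun _ _ => measurableSet_Icc

theorem Fin.eq_and_eq_or_eq_and_eq_of_val_add_eq :
    ∀ a c a' c' : Fin 2, (a' : ℕ) + c' = a + c → a' = a ∧ c' = c ∨ a' = c ∧ c' = a := by
  decide

theorem mem_ruleSet_iff {f : Fin 2 → Fin 2 → Fin 2 → Fin 2} (hsym : ∀ a b c, f a b c = f c b a)
    {p₀ p₁ T R : ℝ} (hT : T < p₁) (hp : 2 * p₁ + T < p₀) (hR : R ∈ Icc 0 T)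
    (v : Fin 2 × Fin 2 × Fin 2) :
    (v.2.1 : ℕ) * p₀ + ((v.1 : ℕ) + v.2.2 : ℕ) * p₁ + R ∈ ruleSet f p₀ p₁ T ↔
      f v.1 v.2.1 v.2.2 = 1 := by
  have hsum : ∀ u : Fin 2 × Fin 2 × Fin 2, (u.1 : ℕ) + u.2.2 ≤ 2 := fun u => by
    have := u.1.is_le; have := u.2.2.is_le; omega
  simp only [ruleSet, mem_iUnion, mem_ofPred_eq, exists_prop, cInterval_nbhdIndex,
    add_mem_Icc_iff_of_lt hT hp hR (hsum v) (hsum _)]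
  constructor
  · rintro ⟨⟨a', b', c'⟩, hf, hb, hac⟩
    obtain rfl : v.2.1 = b' := Fin.ext hb
    rcases Fin.eq_and_eq_or_eq_and_eq_of_val_add_eq _ _ _ _ hac with ⟨rfl, rfl⟩ | ⟨rfl, rfl⟩
    · exact hf
    · rwa [hsym]
  · exact fun hf => ⟨v, hf, rfl, rfl⟩

noncomputable def bitOf (x : ℝ) : Fin 2 := if x = 1 then 1 else 0

theorem measurable_bitOf : Measurable bitOf :=
  Measurable.ite (measurableSet_singleton 1) measurable_const measurable_const

theorem bitOf_eq_iff {x : ℝ} (hx : x = 0 ∨ x = 1) (c : Fin 2) :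
    bitOf x = c ↔ x = (c : ℕ) := by
  rcases hx with rfl | rfl <;> fin_cases c <;> simp [bitOf]

theorem cast_bitOf {x : ℝ} (hx : x = 0 ∨ x = 1) : ((bitOf x : ℕ) : ℝ) = x :=
  ((bitOf_eq_iff hx _).mp rfl).symm

theorem tsum_mul_mem_ruleSet_iff {f : Fin 2 → Fin 2 → Fin 2 → Fin 2}
    (hsym : ∀ a b c, f a b c = f c b a) {p : ℤ → ℝ} (hp : IsDigitWeights p)
    {x : ℤ → ℝ} (hx : ∀ n, x n = 0 ∨ x n = 1) :
    ∑' n, x n * p n ∈ ruleSet f (p 0) (p 1) (2 * ∑' n : ℕ, p (2 + n)) ↔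
      f (bitOf (x (-1))) (bitOf (x 0)) (bitOf (x 1)) = 1 := by
  have hxp : ∀ n, 0 ≤ x n * p n ∧ x n * p n ≤ p n := fun n => by
    rcases hx n with h | h <;> simp [h, hp.nonneg n]
  obtain ⟨R, hR, hsum⟩ := exists_tsum_eq_sum_add_of_nonneg_of_le {-1, 0, 1} hp.summable
    (fun n => (hxp n).1) (fun n => (hxp n).2)
  rw [tsum_compl_eq_two_mul_tsum_of_even hp.summable hp.even] at hR
  have hdigits : ∑' n, x n * p n =
      (bitOf (x 0) : ℕ) * p 0 + ((bitOf (x (-1)) : ℕ) + (bitOf (x 1) : ℕ) : ℕ) * p 1 + R := by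
    rw [hsum, Finset.sum_insert (by decide), Finset.sum_insert (by decide),
      Finset.sum_singleton, hp.even 1]
    push_cast
    rw [cast_bitOf (hx 0), cast_bitOf (hx (-1)), cast_bitOf (hx 1)]
    ring
  rw [hdigits]
  exact mem_ruleSet_iff hsym hp.separated.1 hp.separated.2 hR
    (bitOf (x (-1)), bitOf (x 0), bitOf (x 1))

section Window

variable {Ω : Type*} [MeasurableSpace Ω] {P : Measure Ω} {X : ℤ → Ω → ℝ}

noncomputable def window (X : ℤ → Ω → ℝ) (ω : Ω) : Fin 2 × Fin 2 × Fin 2 :=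
  (bitOf (X (-1) ω), bitOf (X 0 ω), bitOf (X 1 ω))

theorem measurable_window (hmeas : ∀ n, Measurable (X n)) : Measurable (window X) :=
  (measurable_bitOf.comp (hmeas _)).prodMk
    ((measurable_bitOf.comp (hmeas _)).prodMk (measurable_bitOf.comp (hmeas _)))

theorem measure_bitOf_eq (hbern : ∀ n, P {ω | X n ω = 1} = 1 / 2 ∧ P {ω | X n ω = 0} = 1 / 2)
    (hval : ∀ n ω, X n ω = 0 ∨ X n ω = 1) (n : ℤ) (c : Fin 2) :
    P {ω | bitOf (X n ω) = c} = 1 / 2 := by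
  simp only [bitOf_eq_iff (hval n _)]
  fin_cases c
  · simpa using (hbern n).2
  · simpa using (hbern n).1

theorem measure_window_preimage_singleton (hindep : iIndepFun X P)
    (hbern : ∀ n, P {ω | X n ω = 1} = 1 / 2 ∧ P {ω | X n ω = 0} = 1 / 2)
    (hval : ∀ n ω, X n ω = 0 ∨ X n ω = 1) (v : Fin 2 × Fin 2 × Fin 2) :
    P (window X ⁻¹' {v}) = 1 / 8 := by
  let w : ℤ → Fin 2 := fun n => if n = -1 then v.1 else if n = 0 then v.2.1 else v.2.2
  have hset : window X ⁻¹' {v} = ⋂ n ∈ ({-1, 0, 1} : Finset ℤ), {ω | bitOf (X n ω) = w n} := by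
    ext ω
    simp [window, w, Prod.ext_iff]
  rw [hset, hindep.meas_biInter (s := fun n => {ω | bitOf (X n ω) = w n})
      fun n _ => ⟨bitOf ⁻¹' {w n}, measurable_bitOf (measurableSet_singleton _), rfl⟩,
    Finset.prod_congr rfl fun n _ => measure_bitOf_eq hbern hval n (w n)]
  rw [Finset.prod_const, one_div, ← ENNReal.inv_pow]; norm_num

end Window

theorem stmt_15_general (l : ℝ) (hl : Real.log 3 < l)
    (p : ℤ → ℝ) (hp : ∀ n : ℤ, p n = Real.tanh (l / 2) * Real.exp (-l * |(n : ℝ)|))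
    (Ω : Type) [MeasurableSpace Ω] (P : Measure Ω)
    (X : ℤ → Ω → ℝ) (hmeas : ∀ n, Measurable (X n))
    (hindep : iIndepFun X P)
    (hbern : ∀ n, P {ω | X n ω = 1} = 1 / 2 ∧ P {ω | X n ω = 0} = 1 / 2)
    (hval : ∀ n ω, X n ω = 0 ∨ X n ω = 1)
    (S : Ω → ℝ) (hS : ∀ ω, S ω = ∑' n : ℤ, X n ω * p n) (hSm : Measurable S)
    (Cint : ℕ → Set ℝ)
    (hCint : ∀ ν : ℕ, Cint ν =
      Set.Icc ((ν / 3 : ℕ) * p 0 + (ν % 3 : ℕ) * p 1)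
        ((ν / 3 : ℕ) * p 0 + (ν % 3 : ℕ) * p 1 + 2 * ∑' n : ℕ, p ((2 : ℤ) + n)))
    (f₁ f₂ : Fin 2 → Fin 2 → Fin 2 → Fin 2)
    (hsym₁ : ∀ a b c, f₁ a b c = f₁ c b a) (hsym₂ : ∀ a b c, f₂ a b c = f₂ c b a)
    (A₁ A₂ : Set ℝ)
    (hA₁ : A₁ = ⋃ t ∈ {t : Fin 2 × Fin 2 × Fin 2 | f₁ t.1 t.2.1 t.2.2 = 1},
      Cint ((t.2.1 : ℕ) * 3 + (t.1 : ℕ) + (t.2.2 : ℕ)))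
    (hA₂ : A₂ = ⋃ t ∈ {t : Fin 2 × Fin 2 × Fin 2 | f₂ t.1 t.2.1 t.2.2 = 1},
      Cint ((t.2.1 : ℕ) * 3 + (t.1 : ℕ) + (t.2.2 : ℕ))) :
    P.map S (symmDiff A₁ A₂)
      = ((Finset.univ.filter (fun t : Fin 2 × Fin 2 × Fin 2 =>
          f₁ t.1 t.2.1 t.2.2 ≠ f₂ t.1 t.2.1 t.2.2)).card : ENNReal) / 8 := by
  have hl0 : 0 < l := (Real.log_nonneg (by norm_num)).trans_lt hl
  have hr : Real.exp (-l) < 1 / 3 := by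
    simpa using Real.exp_neg_lt_inv_of_log_lt (by norm_num) hl
  have hw : IsDigitWeights p := isDigitWeights_of_eq_mul_pow_natAbs
    (eq_mul_pow_natAbs_of_eq_mul_exp hp) (Real.tanh_pos (half_pos hl0)) (Real.exp_pos _) hr
  obtain rfl : A₁ = ruleSet f₁ (p 0) (p 1) (2 * ∑' n : ℕ, p (2 + n)) := by
    rw [hA₁, funext hCint]; rfl
  obtain rfl : A₂ = ruleSet f₂ (p 0) (p 1) (2 * ∑' n : ℕ, p (2 + n)) := by
    rw [hA₂, funext hCint]; rfl
  have hxor : ∀ a b : Fin 2, (a = 1 ∧ ¬b = 1 ∨ b = 1 ∧ ¬a = 1) ↔ a ≠ b := by decide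
  have hpre : S ⁻¹' symmDiff (ruleSet f₁ (p 0) (p 1) (2 * ∑' n : ℕ, p (2 + n)))
      (ruleSet f₂ (p 0) (p 1) (2 * ∑' n : ℕ, p (2 + n))) =
      window X ⁻¹' (Finset.univ.filter fun t : Fin 2 × Fin 2 × Fin 2 =>
        f₁ t.1 t.2.1 t.2.2 ≠ f₂ t.1 t.2.1 t.2.2) := by
    ext ω
    simp only [mem_preimage, mem_symmDiff, hS, tsum_mul_mem_ruleSet_iff hsym₁ hw (hval · ω),
      tsum_mul_mem_ruleSet_iff hsym₂ hw (hval · ω), Finset.coe_filter, Finset.mem_univ,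
      true_and, mem_ofPred_eq, hxor, window]
  rw [Measure.map_apply hSm ((measurableSet_ruleSet f₁ _ _ _).symmDiff
    (measurableSet_ruleSet f₂ _ _ _)), hpre, ← sum_measure_preimage_singleton _
    fun v _ => measurable_window hmeas (measurableSet_singleton v)]
  rw [Finset.sum_congr rfl fun v _ => measure_window_preimage_singleton hindep hbern hval v,
    Finset.sum_const, nsmul_eq_mul, mul_one_div]

/-- For `λ > log 3`, exponential measure `p`, `μ_λ` the law of
`Σ_λ = ∑_{n∈ℤ} X(n)p(n)`, and symmetric radius-1 CA rules `f₁, f₂` represented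
by unions `A₁, A₂` of C-intervals, the distance `μ_λ(A₁ Δ A₂)` equals `1/8`
times the number of radius-1 neighborhoods `(x₁,x₂,x₃)` on which `f₁` and `f₂`
disagree; in particular it does not depend on `λ`. -/
theorem stmt_15 (l : ℝ) (hl : Real.log 3 < l)
    (p : ℤ → ℝ) (hp : ∀ n : ℤ, p n = Real.tanh (l / 2) * Real.exp (-l * |(n : ℝ)|))
    (Ω : Type) [MeasurableSpace Ω] (P : Measure Ω) [IsProbabilityMeasure P]
    (X : ℤ → Ω → ℝ) (hmeas : ∀ n, Measurable (X n))
    (hindep : iIndepFun X P)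
    (hbern : ∀ n, P {ω | X n ω = 1} = 1 / 2 ∧ P {ω | X n ω = 0} = 1 / 2)
    (hval : ∀ n ω, X n ω = 0 ∨ X n ω = 1)
    (S : Ω → ℝ) (hS : ∀ ω, S ω = ∑' n : ℤ, X n ω * p n) (hSm : Measurable S)
    (Cint : ℕ → Set ℝ)
    (hCint : ∀ ν : ℕ, Cint ν =
      Set.Icc ((ν / 3 : ℕ) * p 0 + (ν % 3 : ℕ) * p 1)
        ((ν / 3 : ℕ) * p 0 + (ν % 3 : ℕ) * p 1 + 2 * ∑' n : ℕ, p ((2 : ℤ) + n)))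
    (f₁ f₂ : Fin 2 → Fin 2 → Fin 2 → Fin 2)
    (hsym₁ : ∀ a b c, f₁ a b c = f₁ c b a) (hsym₂ : ∀ a b c, f₂ a b c = f₂ c b a)
    (A₁ A₂ : Set ℝ)
    (hA₁ : A₁ = ⋃ t ∈ {t : Fin 2 × Fin 2 × Fin 2 | f₁ t.1 t.2.1 t.2.2 = 1},
      Cint ((t.2.1 : ℕ) * 3 + (t.1 : ℕ) + (t.2.2 : ℕ)))
    (hA₂ : A₂ = ⋃ t ∈ {t : Fin 2 × Fin 2 × Fin 2 | f₂ t.1 t.2.1 t.2.2 = 1},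
      Cint ((t.2.1 : ℕ) * 3 + (t.1 : ℕ) + (t.2.2 : ℕ))) :
    P.map S (symmDiff A₁ A₂)
      = ((Finset.univ.filter (fun t : Fin 2 × Fin 2 × Fin 2 =>
          f₁ t.1 t.2.1 t.2.2 ≠ f₂ t.1 t.2.1 t.2.2)).card : ENNReal) / 8 :=
  stmt_15_general l hl p hp Ω P X hmeas hindep hbern hval S hS hSm Cint hCint f₁ f₂ hsym₁ hsym₂ A₁
    A₂ hA₁ hA₂
end
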